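/- Let f be differentiable with L-Lipschitz gradient, g proper, and let x⁺ = prox_{γg}(x − γv) for γ > 0 and v ∈ ℝⁿ. Then dist(0, ∂F(x⁺)) ≤ ‖x − x⁺‖/γ + ‖∇f(x⁺) − w‖ + ‖w − v‖ for any vector w, where F = f + g and ∂F(x⁺) = ∇f(x⁺) + ∂g(x⁺). In particular, with w = Σ_i ∇f_i(x^{k−τ_i}), dist(0, ∂F(x^{k+1})) ≤ ‖Δ^k‖/γ + L·Σ_{d=k−τ}^{k} ‖Δ^d‖ + ‖w − v‖. -/

import Mathlib

open scoped RealInnerProductSpace BigOperators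

/-- The Fréchet subdifferential of `g` at `x`. -/
def frechetSubdiff {n : ℕ} (g : EuclideanSpace ℝ (Fin n) → ℝ)
    (x : EuclideanSpace ℝ (Fin n)) : Set (EuclideanSpace ℝ (Fin n)) :=
  {u | ∀ ε : ℝ, 0 < ε → ∃ δ : ℝ, 0 < δ ∧ ∀ y, ‖y - x‖ ≤ δ →
      g y - g x - ⟪u, y - x⟫ ≥ -(ε * ‖y - x‖)}

/-! For `p = prox_{γg}(a)`, expanding `‖a - y‖² = ‖a - p‖² - 2⟪a - p, y - p⟫ + ‖y - p‖²` in the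
prox inequality shows that `(a - p)/γ` is a Fréchet subgradient of `g` at `p`, up to an error
quadratic in `‖y - p‖`. Hence `∇f(p) + (a - p)/γ ∈ ∂F(p)`, and with `a = x - γv` its norm splits by
the triangle inequality through any `w`. For the delayed `w = ∑ᵢ ∇fᵢ(x^{k-τᵢ})`, Lipschitz
continuity bounds `‖∇f(x^{k+1}) - w‖` by `∑ᵢ Lᵢ ‖x^{k+1} - x^{k-τᵢ}‖`, and each of these
distances telescopes into the steps `Δ^d` of the delay window. -/

open Finset

lemma inner_sub_le_of_prox {E : Type*} [NormedAddCommGroup E] [InnerProductSpace ℝ E]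
    {g : E → ℝ} {γ : ℝ} {a p : E}
    (hprox : ∀ y, (1 / 2) * ‖a - p‖ ^ 2 + γ * g p ≤ (1 / 2) * ‖a - y‖ ^ 2 + γ * g y) (y : E) :
    ⟪a - p, y - p⟫ ≤ γ * (g y - g p) + ‖y - p‖ ^ 2 / 2 := by
  have hsq : ‖a - y‖ ^ 2 = ‖a - p‖ ^ 2 - 2 * ⟪a - p, y - p⟫ + ‖y - p‖ ^ 2 := by
    rw [show a - y = (a - p) - (y - p) by abel, norm_sub_sq_real]
  linarith [hprox y]

lemma smul_sub_mem_frechetSubdiff_of_prox {n : ℕ} {g : EuclideanSpace ℝ (Fin n) → ℝ} {γ : ℝ}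
    (hγ : 0 < γ) {a p : EuclideanSpace ℝ (Fin n)}
    (hprox : ∀ y, (1 / 2) * ‖a - p‖ ^ 2 + γ * g p ≤ (1 / 2) * ‖a - y‖ ^ 2 + γ * g y) :
    γ⁻¹ • (a - p) ∈ frechetSubdiff g p := by
  intro ε hε
  refine ⟨2 * γ * ε, by positivity, fun y hy => ?_⟩
  have hinner := inner_sub_le_of_prox hprox y
  have hquad : ‖y - p‖ ^ 2 / 2 ≤ γ * (ε * ‖y - p‖) := by
    nlinarith [norm_nonneg (y - p)]
  rw [real_inner_smul_left, ge_iff_le, ← mul_le_mul_iff_right₀ hγ,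
    show γ * (g y - g p - γ⁻¹ * ⟪a - p, y - p⟫) = γ * (g y - g p) - ⟪a - p, y - p⟫ by
      field_simp]
  linarith

lemma infDist_zero_add_frechetSubdiff_le {n : ℕ} {g : EuclideanSpace ℝ (Fin n) → ℝ} {γ : ℝ}
    (hγ : 0 < γ) {x v p : EuclideanSpace ℝ (Fin n)}
    (hprox : ∀ y, (1 / 2) * ‖x - γ • v - p‖ ^ 2 + γ * g p ≤
      (1 / 2) * ‖x - γ • v - y‖ ^ 2 + γ * g y) (s w : EuclideanSpace ℝ (Fin n)) :
    Metric.infDist 0 ((s + ·) '' frechetSubdiff g p) ≤ ‖x - p‖ / γ + ‖s - w‖ + ‖w - v‖ := by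
  have hmem := smul_sub_mem_frechetSubdiff_of_prox hγ hprox
  have hres : s + γ⁻¹ • (x - γ • v - p) = γ⁻¹ • (x - p) + (s - w) + (w - v) := by
    rw [sub_right_comm, smul_sub, smul_smul, inv_mul_cancel₀ hγ.ne', one_smul]
    abel
  calc Metric.infDist 0 ((s + ·) '' frechetSubdiff g p)
      ≤ ‖s + γ⁻¹ • (x - γ • v - p)‖ :=
        (Metric.infDist_le_dist_of_mem (Set.mem_image_of_mem (s + ·) hmem)).trans_eq
          (dist_zero_left _)
    _ ≤ ‖γ⁻¹ • (x - p)‖ + ‖s - w‖ + ‖w - v‖ := hres ▸ norm_add₃_le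
    _ = ‖x - p‖ / γ + ‖s - w‖ + ‖w - v‖ := by
        rw [norm_smul, norm_inv, Real.norm_of_nonneg hγ.le, inv_mul_eq_div]

lemma norm_sub_le_sum_Icc_norm_sub {E : Type*} [SeminormedAddCommGroup E] (x : ℤ → E)
    {a b : ℤ} (hab : a ≤ b) :
    ‖x (b + 1) - x a‖ ≤ ∑ d ∈ Icc a b, ‖x (d + 1) - x d‖ := by
  induction b, hab using Int.leInduction with
  | base => simp
  | succ b hab ih =>
    rw [← insert_Icc_right_eq_Icc_add_one (by omega),
      sum_insert (by simp)]
    calc ‖x (b + 1 + 1) - x a‖ ≤ ‖x (b + 1 + 1) - x (b + 1)‖ + ‖x (b + 1) - x a‖ :=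
          norm_sub_le_norm_sub_add_norm_sub _ _ _
      _ ≤ _ := by gcongr

lemma norm_sum_sub_sum_le_of_lipschitz {E : Type*} [SeminormedAddCommGroup E] {ι : Type*}
    (t : Finset ι) (G : ι → E → E) (L : ι → ℝ) (hL : ∀ i, 0 ≤ L i)
    (hlip : ∀ i a b, ‖G i a - G i b‖ ≤ L i * ‖a - b‖) (p : E) (y : ι → E) {S : ℝ}
    (hS : ∀ i ∈ t, ‖p - y i‖ ≤ S) :
    ‖∑ i ∈ t, G i p - ∑ i ∈ t, G i (y i)‖ ≤ (∑ i ∈ t, L i) * S := by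
  rw [← sum_sub_distrib, sum_mul]
  refine (norm_sum_le _ _).trans (sum_le_sum fun i hi => ?_)
  exact (hlip i _ _).trans (mul_le_mul_of_nonneg_left (hS i hi) (hL i))

theorem stmt_19_general (n m : ℕ)
    (gf : Fin m → EuclideanSpace ℝ (Fin n) → EuclideanSpace ℝ (Fin n))
    (L : Fin m → ℝ) (hL : ∀ i, 0 < L i)
    (hlip : ∀ i, ∀ a b : EuclideanSpace ℝ (Fin n), ‖gf i a - gf i b‖ ≤ L i * ‖a - b‖)
    (g : EuclideanSpace ℝ (Fin n) → ℝ) (γ : ℝ) (hγ : 0 < γ)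
    (v : EuclideanSpace ℝ (Fin n)) (x : ℤ → EuclideanSpace ℝ (Fin n)) (k : ℤ)
    (τ : ℕ) (τi : Fin m → ℕ) (hdel : ∀ i, τi i ≤ τ)
    (hprox : ∀ y : EuclideanSpace ℝ (Fin n),
      (1 / 2) * ‖x k - γ • v - x (k + 1)‖ ^ 2 + γ * g (x (k + 1)) ≤
        (1 / 2) * ‖x k - γ • v - y‖ ^ 2 + γ * g y) :
    (∀ w : EuclideanSpace ℝ (Fin n),
      Metric.infDist 0
          ((fun u => (∑ i, gf i (x (k + 1))) + u) '' frechetSubdiff g (x (k + 1))) ≤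
        ‖x k - x (k + 1)‖ / γ + ‖(∑ i, gf i (x (k + 1))) - w‖ + ‖w - v‖) ∧
    Metric.infDist 0
        ((fun u => (∑ i, gf i (x (k + 1))) + u) '' frechetSubdiff g (x (k + 1))) ≤
      ‖x (k + 1) - x k‖ / γ
      + (∑ i, L i) * (∑ d ∈ Finset.Icc (k - (τ : ℤ)) k, ‖x (d + 1) - x d‖)
      + ‖(∑ i, gf i (x (k - (τi i : ℤ)))) - v‖ := by
  have hres := infDist_zero_add_frechetSubdiff_le hγ hprox (∑ i, gf i (x (k + 1)))
  refine ⟨hres, ?_⟩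
  have hdelay : ∀ i ∈ univ, ‖x (k + 1) - x (k - τi i)‖ ≤
      ∑ d ∈ Icc (k - (τ : ℤ)) k, ‖x (d + 1) - x d‖ := fun i _ =>
    (norm_sub_le_sum_Icc_norm_sub x (by omega)).trans <|
      sum_le_sum_of_subset_of_nonneg (Icc_subset_Icc_left (by have := hdel i; omega))
        fun _ _ _ => norm_nonneg _
  have hlag := norm_sum_sub_sum_le_of_lipschitz univ gf L (fun i => (hL i).le) hlip _ _ hdelay
  rw [norm_sub_rev (x (k + 1))]
  linarith [hres (∑ i, gf i (x (k - (τi i : ℤ))))]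

/-- Subgradient-residual bound at the prox point: with `f = ∑ f_i`, each `∇f_i` being
`L_i`-Lipschitz (`L = ∑ L_i`), and `x^{k+1} = prox_{γ g}(x^k − γ v)`, for
`∂F(x^{k+1}) = ∇f(x^{k+1}) + ∂g(x^{k+1})` one has, for any vector `w`,
`dist(0, ∂F(x^{k+1})) ≤ ‖x^k − x^{k+1}‖/γ + ‖∇f(x^{k+1}) − w‖ + ‖w − v‖`; in
particular with `w = ∑_i ∇f_i(x^{k−τ_i})` and delays `τ_i ≤ τ`,
`dist(0, ∂F(x^{k+1})) ≤ ‖Δ^k‖/γ + L ∑_{d=k−τ}^{k} ‖Δ^d‖ + ‖w − v‖`. -/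
theorem stmt_19 (n m : ℕ) (f : Fin m → EuclideanSpace ℝ (Fin n) → ℝ)
    (gf : Fin m → EuclideanSpace ℝ (Fin n) → EuclideanSpace ℝ (Fin n))
    (hgrad : ∀ i z, HasGradientAt (f i) (gf i z) z)
    (L : Fin m → ℝ) (hL : ∀ i, 0 < L i)
    (hlip : ∀ i, ∀ a b : EuclideanSpace ℝ (Fin n), ‖gf i a - gf i b‖ ≤ L i * ‖a - b‖)
    (g : EuclideanSpace ℝ (Fin n) → ℝ) (γ : ℝ) (hγ : 0 < γ)
    (v : EuclideanSpace ℝ (Fin n)) (x : ℤ → EuclideanSpace ℝ (Fin n)) (k : ℤ)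
    (τ : ℕ) (τi : Fin m → ℕ) (hdel : ∀ i, τi i ≤ τ)
    (hprox : ∀ y : EuclideanSpace ℝ (Fin n),
      (1 / 2) * ‖x k - γ • v - x (k + 1)‖ ^ 2 + γ * g (x (k + 1)) ≤
        (1 / 2) * ‖x k - γ • v - y‖ ^ 2 + γ * g y) :
    (∀ w : EuclideanSpace ℝ (Fin n),
      Metric.infDist 0
          ((fun u => (∑ i, gf i (x (k + 1))) + u) '' frechetSubdiff g (x (k + 1))) ≤
        ‖x k - x (k + 1)‖ / γ + ‖(∑ i, gf i (x (k + 1))) - w‖ + ‖w - v‖) ∧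
    Metric.infDist 0
        ((fun u => (∑ i, gf i (x (k + 1))) + u) '' frechetSubdiff g (x (k + 1))) ≤
      ‖x (k + 1) - x k‖ / γ
      + (∑ i, L i) * (∑ d ∈ Finset.Icc (k - (τ : ℤ)) k, ‖x (d + 1) - x d‖)
      + ‖(∑ i, gf i (x (k - (τi i : ℤ)))) - v‖ :=
  stmt_19_general n m gf L hL hlip g γ hγ v x k τ τi hdel hprox
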